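/- arXiv:2510.17690 — 8 statements merged into one kernel-verified Lean document; each statement's English description precedes it below -/
import Mathlib

section
/- For every time step t, state ŝ, action â, and randomized Markov policy π, the partial derivative of the MMDP return with respect to the policy entry π_t(ŝ,â) equals the sum over models m of the product of the model weight and the state–action value: ∂ρ(π)/∂π_t(ŝ,â) = Σ_{m∈M} b^π_{t,m}(ŝ) · q^π_{t,m}(ŝ,â). -/
/-!
Perturbing the entry `π_t(ŝ, â)` leaves the policy unchanged at every other time, so the
weights `b_τ` for `τ ≤ t` and the values `v_τ`, `q_τ` for `τ > t` do not move. For `τ < t`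
the Bellman recursion and the forward recursion for `b` are adjoint:
`Σ_s b_τ(s) v_τ(s) = Σ_s b_τ(s) Σ_a π_τ(s,a) r_τ(s,a) + Σ_s b_{τ+1}(s) v_{τ+1}(s)`,
so the derivative of `Σ_s b_τ v_τ` is independent of `τ ≤ t`. At `τ = t` the pairing
`Σ_s b_t(s) Σ_a π_t(s,a) q_t(s,a)` is affine in the perturbed entry, with slope
`b_t(ŝ) q_t(ŝ,â)`, and at `τ = 1` it is the return of one model.
-/

set_option autoImplicit false

open Finset

noncomputable section

/-- Value function of a randomized Markov policy in one model of an MMDP, computed with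
`n` remaining steps; `mmdpVAux T p r pol n` corresponds to the value at time `T + 1 - n`
(so `n = 0` is the zero value at time `T + 1`). -/
def mmdpVAux {S A : Type*} [Fintype S] [Fintype A] (T : ℕ)
    (p : S → A → S → ℝ) (r : ℕ → S → A → ℝ) (pol : ℕ → S → A → ℝ) : ℕ → S → ℝ
  | 0 => fun _ => 0
  | n + 1 => fun s => ∑ a : A, pol (T - n) s a *
      (r (T - n) s a + ∑ s' : S, p s a s' * mmdpVAux T p r pol n s')

/-- The value function `v^π_{t,m}` (for the model with transitions `p` and rewards `r`). -/
def mmdpV {S A : Type*} [Fintype S] [Fintype A] (T : ℕ)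
    (p : S → A → S → ℝ) (r : ℕ → S → A → ℝ) (pol : ℕ → S → A → ℝ) (t : ℕ) : S → ℝ :=
  mmdpVAux T p r pol (T + 1 - t)

/-- The state-action value function `q^π_{t,m}`:
`q^π_{t,m}(s,a) = r^m_t(s,a) + Σ_{s'} p^m(s'|s,a) · v^π_{t+1,m}(s')`. -/
def mmdpQ {S A : Type*} [Fintype S] [Fintype A] (T : ℕ)
    (p : S → A → S → ℝ) (r : ℕ → S → A → ℝ) (pol : ℕ → S → A → ℝ) (t : ℕ) (s : S) (a : A) : ℝ :=
  r t s a + ∑ s' : S, p s a s' * mmdpV T p r pol (t + 1) s'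

/-- Forward recursion for the model weights of one model, with initial weight `w0`;
the argument is `t - 1`, so `mmdpBAux p pol w0 0 = w0` is the weight at time `1`. -/
def mmdpBAux {S A : Type*} [Fintype S] [Fintype A]
    (p : S → A → S → ℝ) (pol : ℕ → S → A → ℝ) (w0 : S → ℝ) : ℕ → S → ℝ
  | 0 => w0
  | k + 1 => fun s' => ∑ s : S, ∑ a : A, p s a s' * pol (k + 1) s a * mmdpBAux p pol w0 k s

/-- The model weight `b^π_{t,m}(s)` for the model with transitions `p`, initial weight
`w0 = λ_m · μ`. -/
def mmdpB {S A : Type*} [Fintype S] [Fintype A]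
    (p : S → A → S → ℝ) (pol : ℕ → S → A → ℝ) (w0 : S → ℝ) (t : ℕ) : S → ℝ :=
  mmdpBAux p pol w0 (t - 1)

/-- The MMDP return `ρ(π) = Σ_m Σ_s b^π_{1,m}(s) · v^π_{1,m}(s)` with
`b^π_{1,m}(s) = λ_m · μ(s)`. -/
def mmdpRet {S A M : Type*} [Fintype S] [Fintype A] [Fintype M] (T : ℕ)
    (p : M → S → A → S → ℝ) (r : M → ℕ → S → A → ℝ) (μ : S → ℝ) (lam : M → ℝ)
    (pol : ℕ → S → A → ℝ) : ℝ :=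
  ∑ m : M, ∑ s : S, lam m * μ s * mmdpV T (p m) (r m) pol 1 s

def policyUpdate {S A : Type*} [DecidableEq S] [DecidableEq A] (pol : ℕ → S → A → ℝ)
    (t : ℕ) (s₀ : S) (a₀ : A) (x : ℝ) : ℕ → S → A → ℝ :=
  fun t' s a => if t' = t ∧ s = s₀ ∧ a = a₀ then x else pol t' s a

theorem policyUpdate_of_ne {S A : Type*} [DecidableEq S] [DecidableEq A]
    (pol : ℕ → S → A → ℝ) {t τ : ℕ} (s₀ : S) (a₀ : A) (x : ℝ) (h : τ ≠ t) :
    policyUpdate pol t s₀ a₀ x τ = pol τ := by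
  funext s a
  simp [policyUpdate, h]

theorem hasDerivAt_ite_id (P : Prop) [Decidable P] (c x₀ : ℝ) :
    HasDerivAt (fun x : ℝ => if P then x else c) (if P then 1 else 0) x₀ := by
  split_ifs
  · exact hasDerivAt_id x₀
  · exact hasDerivAt_const x₀ c

section SingleModel

variable {S A : Type*} [Fintype S] [Fintype A] (T : ℕ)
  (p : S → A → S → ℝ) (r : ℕ → S → A → ℝ)

theorem mmdpVAux_congr {pol pol' : ℕ → S → A → ℝ} :
    ∀ n, (∀ i < n, pol (T - i) = pol' (T - i)) →
      mmdpVAux T p r pol n = mmdpVAux T p r pol' n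
  | 0, _ => rfl
  | n + 1, h => by
    funext s
    simp only [mmdpVAux, h n n.lt_succ_self,
      mmdpVAux_congr n fun i hi => h i (Nat.lt_succ_of_lt hi)]

theorem mmdpV_congr {pol pol' : ℕ → S → A → ℝ} {k : ℕ} (h : ∀ τ, k ≤ τ → pol τ = pol' τ) :
    mmdpV T p r pol k = mmdpV T p r pol' k :=
  mmdpVAux_congr T p r _ fun i hi => h (T - i) (by omega)

theorem mmdpQ_congr {pol pol' : ℕ → S → A → ℝ} {k : ℕ} (h : ∀ τ, k < τ → pol τ = pol' τ) :
    mmdpQ T p r pol k = mmdpQ T p r pol' k := by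
  funext s a
  rw [mmdpQ, mmdpQ, mmdpV_congr T p r h]

theorem mmdpV_eq_sum_mul_mmdpQ (pol : ℕ → S → A → ℝ) {τ : ℕ} (hτ : τ ≤ T) (s : S) :
    mmdpV T p r pol τ s = ∑ a, pol τ s a * mmdpQ T p r pol τ s a := by
  have hsucc : T + 1 - τ = T - τ + 1 := by omega
  have htime : T - (T - τ) = τ := by omega
  have hnext : T + 1 - (τ + 1) = T - τ := by omega
  rw [mmdpV, hsucc, mmdpVAux, htime]
  simp only [mmdpQ, mmdpV, hnext]

theorem mmdpB_succ (pol : ℕ → S → A → ℝ) (w0 : S → ℝ) {τ : ℕ} (hτ : 1 ≤ τ) (s' : S) :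
    mmdpB p pol w0 (τ + 1) s' = ∑ s, ∑ a, p s a s' * pol τ s a * mmdpB p pol w0 τ s := by
  obtain ⟨k, rfl⟩ : ∃ k, τ = k + 1 := ⟨τ - 1, by omega⟩
  rfl

theorem sum_mmdpB_mul_mmdpV_eq_add_succ {pol pol' : ℕ → S → A → ℝ} (w0 : S → ℝ) {τ : ℕ}
    (h1τ : 1 ≤ τ) (hτT : τ ≤ T) (hτ : pol' τ = pol τ) :
    ∑ s, mmdpB p pol w0 τ s * mmdpV T p r pol' τ s
      = ∑ s, mmdpB p pol w0 τ s * ∑ a, pol τ s a * r τ s a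
        + ∑ s, mmdpB p pol w0 (τ + 1) s * mmdpV T p r pol' (τ + 1) s := by
  simp only [mmdpV_eq_sum_mul_mmdpQ T p r pol' hτT, mmdpQ, hτ, mmdpB_succ p pol w0 h1τ,
    mul_add, Finset.mul_sum, Finset.sum_mul, Finset.sum_add_distrib]
  congr 1
  conv_rhs => rw [Finset.sum_comm]
  refine Finset.sum_congr rfl fun s _ => ?_
  conv_rhs => rw [Finset.sum_comm]
  exact Finset.sum_congr rfl fun a _ => Finset.sum_congr rfl fun s' _ => by ring

variable [DecidableEq S] [DecidableEq A]

theorem hasDerivAt_sum_mul_mmdpV_policyUpdate (pol : ℕ → S → A → ℝ) (b : S → ℝ) {t : ℕ}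
    (ht : t ≤ T) (s₀ : S) (a₀ : A) :
    HasDerivAt (fun x => ∑ s, b s * mmdpV T p r (policyUpdate pol t s₀ a₀ x) t s)
      (b s₀ * mmdpQ T p r pol t s₀ a₀) (pol t s₀ a₀) := by
  have hq (x : ℝ) : mmdpQ T p r (policyUpdate pol t s₀ a₀ x) t = mmdpQ T p r pol t :=
    mmdpQ_congr T p r fun τ hτ => policyUpdate_of_ne pol s₀ a₀ x hτ.ne'
  simp only [mmdpV_eq_sum_mul_mmdpQ T p r _ ht, hq, policyUpdate, true_and]
  have hderiv := HasDerivAt.fun_sum (u := univ) fun s _ =>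
    (HasDerivAt.fun_sum (u := univ) fun a _ =>
      (hasDerivAt_ite_id (s = s₀ ∧ a = a₀) (pol t s a) (pol t s₀ a₀)).mul_const
        (mmdpQ T p r pol t s a)).const_mul (b s)
  refine hderiv.congr_deriv ?_
  simp [ite_and]

theorem hasDerivAt_sum_mmdpB_mul_mmdpV_policyUpdate (pol : ℕ → S → A → ℝ) (w0 : S → ℝ)
    {τ t : ℕ} (h1τ : 1 ≤ τ) (hτt : τ ≤ t) (htT : t ≤ T) (s₀ : S) (a₀ : A) :
    HasDerivAt (fun x => ∑ s, mmdpB p pol w0 τ s * mmdpV T p r (policyUpdate pol t s₀ a₀ x) τ s)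
      (mmdpB p pol w0 t s₀ * mmdpQ T p r pol t s₀ a₀) (pol t s₀ a₀) := by
  induction hτt using Nat.decreasingInduction with
  | self => exact hasDerivAt_sum_mul_mmdpV_policyUpdate T p r pol _ htT s₀ a₀
  | of_succ k hkt ih =>
    have hstep (x : ℝ) := sum_mmdpB_mul_mmdpV_eq_add_succ T p r w0 h1τ (by omega)
      (policyUpdate_of_ne pol s₀ a₀ x hkt.ne)
    simp only [hstep]
    exact (ih (by omega)).const_add _

end SingleModel

theorem mmdp_policy_gradient_general {S A M : Type*} [Fintype S] [Fintype A] [Fintype M]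
    [DecidableEq S] [DecidableEq A] (T : ℕ)
    (p : M → S → A → S → ℝ) (r : M → ℕ → S → A → ℝ) (μ : S → ℝ) (lam : M → ℝ)
    (pol : ℕ → S → A → ℝ)
    (t : ℕ) (ht1 : 1 ≤ t) (htT : t ≤ T) (s₀ : S) (a₀ : A) :
    HasDerivAt
      (fun x : ℝ => mmdpRet T p r μ lam
        (fun t' s a => if t' = t ∧ s = s₀ ∧ a = a₀ then x else pol t' s a))
      (∑ m : M, mmdpB (p m) pol (fun s => lam m * μ s) t s₀ * mmdpQ T (p m) (r m) pol t s₀ a₀)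
      (pol t s₀ a₀) :=
  -- definitionally, `mmdpRet` sums the pairing at `τ = 1` over models, as `mmdpB _ _ w0 1 = w0`
  HasDerivAt.fun_sum fun m _ => hasDerivAt_sum_mmdpB_mul_mmdpV_policyUpdate T (p m) (r m) pol
    (fun s => lam m * μ s) le_rfl ht1 htT s₀ a₀

/-- Policy gradient of an MMDP: for every time step `t`, state `s₀`, action `a₀`, and
randomized Markov policy `pol`, the partial derivative of the return with respect to
the policy entry `pol t s₀ a₀` equals `Σ_m b^π_{t,m}(s₀) · q^π_{t,m}(s₀,a₀)`. -/
theorem mmdp_policy_gradient {S A M : Type*} [Fintype S] [Fintype A] [Fintype M]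
    [DecidableEq S] [DecidableEq A] (T : ℕ)
    (p : M → S → A → S → ℝ) (r : M → ℕ → S → A → ℝ) (μ : S → ℝ) (lam : M → ℝ)
    (hp0 : ∀ m s a s', 0 ≤ p m s a s') (hp1 : ∀ m s a, ∑ s' : S, p m s a s' = 1)
    (hμ0 : ∀ s, 0 ≤ μ s) (hμ1 : ∑ s : S, μ s = 1)
    (hlam0 : ∀ m, 0 ≤ lam m) (hlam1 : ∑ m : M, lam m = 1)
    (pol : ℕ → S → A → ℝ)
    (hpol0 : ∀ t s a, 0 ≤ pol t s a) (hpol1 : ∀ t s, ∑ a : A, pol t s a = 1)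
    (t : ℕ) (ht1 : 1 ≤ t) (htT : t ≤ T) (s₀ : S) (a₀ : A) :
    HasDerivAt
      (fun x : ℝ => mmdpRet T p r μ lam
        (fun t' s a => if t' = t ∧ s = s₀ ∧ a = a₀ then x else pol t' s a))
      (∑ m : M, mmdpB (p m) pol (fun s => lam m * μ s) t s₀ * mmdpQ T (p m) (r m) pol t s₀ a₀)
      (pol t s₀ a₀) :=
  mmdp_policy_gradient_general T p r μ lam pol t ht1 htT s₀ a₀
end
end

section
/- Let α ∈ (0,1) and ε ∈ [α, 1). Define v : ℕ → ℝ by v(0) = 0 and v(t+1) = −1 + min{ q₁·v(t) : q = (q₁,q₂) ∈ ℝ²₊, q₁ + q₂ = 1, q₁ ≤ ε/α, q₂ ≤ (1−ε)/α }. Then v(t) ≤ −t for every t ∈ ℕ, and consequently v(t) → −∞ as t → ∞. (This shows that the total reward criterion with the nested CVaR risk measure can be unbounded on a transient MDP.) -/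
set_option autoImplicit false

open Filter

/-- The total reward criterion with nested CVaR can be unbounded on a transient MDP:
the nested-CVaR dynamic program `v(t+1) = -1 + min { q₁·v(t) | q ∈ Δ², q₁ ≤ ε/α, q₂ ≤ (1-ε)/α }`
satisfies `v t ≤ -t`, hence `v t → -∞`. -/
theorem nested_cvar_unbounded (α ε : ℝ) (hα : α ∈ Set.Ioo (0 : ℝ) 1)
    (hε : ε ∈ Set.Ico α 1) (v : ℕ → ℝ) (hv0 : v 0 = 0)
    (hvrec : ∀ t : ℕ, v (t + 1) = -1 + sInf {x : ℝ | ∃ q₁ q₂ : ℝ, 0 ≤ q₁ ∧ 0 ≤ q₂ ∧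
      q₁ + q₂ = 1 ∧ q₁ ≤ ε / α ∧ q₂ ≤ (1 - ε) / α ∧ x = q₁ * v t}) :
    (∀ t : ℕ, v t ≤ -(t : ℝ)) ∧ Tendsto v atTop atBot := by
  obtain ⟨hα0, hα1⟩ := hα
  obtain ⟨hαε, hε1⟩ := hε
  have key : ∀ t : ℕ, v t ≤ -(t : ℝ) := by
    intro t
    induction t with
    | zero => simp [hv0]
    | succ t ih =>
      have hmem : v t ∈ {x : ℝ | ∃ q₁ q₂ : ℝ, 0 ≤ q₁ ∧ 0 ≤ q₂ ∧
          q₁ + q₂ = 1 ∧ q₁ ≤ ε / α ∧ q₂ ≤ (1 - ε) / α ∧ x = q₁ * v t} := by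
        refine ⟨1, 0, zero_le_one, le_refl 0, by ring, ?_, ?_, by ring⟩
        · rw [le_div_iff₀ hα0]; linarith
        · apply div_nonneg <;> linarith
      have hbdd : BddBelow {x : ℝ | ∃ q₁ q₂ : ℝ, 0 ≤ q₁ ∧ 0 ≤ q₂ ∧
          q₁ + q₂ = 1 ∧ q₁ ≤ ε / α ∧ q₂ ≤ (1 - ε) / α ∧ x = q₁ * v t} := by
        refine ⟨-((ε / α) * |v t|), ?_⟩
        rintro x ⟨q₁, q₂, hq₁, hq₂, hsum, hq₁le, hq₂le, rfl⟩
        have h1 : |q₁ * v t| ≤ (ε / α) * |v t| := by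
          rw [abs_mul, abs_of_nonneg hq₁]
          exact mul_le_mul_of_nonneg_right hq₁le (abs_nonneg _)
        have := neg_abs_le (q₁ * v t)
        linarith
      have := csInf_le hbdd hmem
      rw [hvrec t]
      push_cast
      linarith
  refine ⟨key, ?_⟩
  exact tendsto_atBot_mono key (tendsto_neg_atBot_iff.mpr tendsto_natCast_atTop_atTop)
end

section
/- Let β > 0, ε ∈ (0,1), and r ∈ ℝ. Define a_t = −β⁻¹ · log( Σ_{k=0}^{t−1} (1−ε)·ε^k · exp(−β·r·k) ) for t ≥ 1. Then the sequence (a_t) converges to a finite limit as t → ∞ if and only if ε·exp(−β·r) < 1; and if ε·exp(−β·r) ≥ 1, then a_t → −∞. In particular, taking r = −1 and β > −log ε yields a_t → −∞, showing that the ERM total-reward value of a transient MDP can equal −∞ for a large enough risk level β. -/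
set_option autoImplicit false

open Filter Finset Real

/-! Writing `q = ε·exp(-β r)`, the sum inside the logarithm is the partial sum
`Σ_{k<t} (1-ε) q^k` of a geometric series. For `q < 1` it converges to the positive number
`(1-ε)/(1-q)`, so `a t` converges; for `q ≥ 1` it is at least `(1-ε) t`, so its logarithm
tends to `+∞` and `a t → -∞`.
For `r = -1` we have `q = ε·exp β = exp(log ε + β) > 1` as soon as `β > -log ε`. -/

lemma mul_pow_mul_exp_mul_natCast (c ε x : ℝ) (k : ℕ) :
    c * ε ^ k * exp (x * k) = c * (ε * exp x) ^ k := by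
  rw [mul_comm x, exp_nat_mul, mul_pow, mul_assoc]

lemma tendsto_sum_range_const_mul_pow_atTop {c q : ℝ} (hc : 0 < c) (hq : 1 ≤ q) :
    Tendsto (fun t : ℕ => ∑ k ∈ range t, c * q ^ k) atTop atTop := by
  refine tendsto_atTop_mono (fun t => ?_) (tendsto_natCast_atTop_atTop.atTop_mul_const hc)
  calc (t : ℝ) * c = (range t).card • c := by simp
    _ ≤ ∑ k ∈ range t, c * q ^ k :=
      card_nsmul_le_sum _ _ _ fun k _ => le_mul_of_one_le_right hc.le (one_le_pow₀ hq)

lemma one_lt_mul_exp_of_neg_log_lt {ε x : ℝ} (hε : 0 < ε) (h : -log ε < x) :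
    1 < ε * exp x := by
  rw [← exp_log hε, ← exp_add]
  exact one_lt_exp_iff.mpr (by linarith)

/-- The ERM total-reward value of the one-state transient MDP (per-step reward `r`,
self-transition probability `ε`, termination probability `1-ε`):
`a t = -β⁻¹ log (Σ_{k<t} (1-ε) ε^k exp(-β r k))` converges to a finite limit iff
`ε·exp(-β r) < 1`; otherwise `a t → -∞`.  In particular for `r = -1` and
`β > -log ε` we get `a t → -∞`. -/
theorem erm_trc_can_be_unbounded (β ε r : ℝ) (hβ : 0 < β) (hε : ε ∈ Set.Ioo (0 : ℝ) 1) :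
    let a : ℕ → ℝ := fun t =>
      -β⁻¹ * Real.log (∑ k ∈ Finset.range t, (1 - ε) * ε ^ k * Real.exp (-β * r * k))
    ((∃ L : ℝ, Tendsto a atTop (nhds L)) ↔ ε * Real.exp (-β * r) < 1) ∧
    (1 ≤ ε * Real.exp (-β * r) → Tendsto a atTop atBot) ∧
    (r = -1 → -Real.log ε < β → Tendsto a atTop atBot) := by
  intro a
  set q := ε * exp (-β * r)
  have hc : 0 < 1 - ε := sub_pos.mpr hε.2
  have ha : a = fun t => -β⁻¹ * log (∑ k ∈ range t, (1 - ε) * q ^ k) := by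
    simp only [a, mul_pow_mul_exp_mul_natCast, q]
  have hbot (hq : 1 ≤ q) : Tendsto a atTop atBot := by
    have hlog := (tendsto_log_atTop.comp (tendsto_sum_range_const_mul_pow_atTop hc hq))
      |>.const_mul_atTop (inv_pos.mpr hβ)
    simpa only [ha, neg_mul, Function.comp_def] using tendsto_neg_atTop_atBot.comp hlog
  have hlim (hq : q < 1) : ∃ L, Tendsto a atTop (nhds L) := by
    have hsum := (hasSum_geometric_of_lt_one (mul_pos hε.1 (exp_pos _)).le hq)
      |>.mul_left (1 - ε) |>.tendsto_sum_nat
    have hpos : 0 < (1 - ε) * (1 - q)⁻¹ := mul_pos hc (inv_pos.mpr (sub_pos.mpr hq))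
    exact ⟨_, ha ▸ (hsum.log hpos.ne').const_mul (-β⁻¹)⟩
  refine ⟨⟨fun ⟨L, hL⟩ => ?_, hlim⟩, hbot, fun hr hlog => hbot ?_⟩
  · by_contra hq
    exact not_tendsto_nhds_of_tendsto_atBot (hbot (not_lt.mp hq)) L hL
  · rw [show q = ε * exp β by simp [q, hr]]
    exact (one_lt_mul_exp_of_neg_log_lt hε.1 hlog).le
end

section
/- Let n ≥ 1. Let P be an n×n entrywise nonnegative matrix with row sums at most 1, with spectral radius ρ(P) < 1, and let p = (I − P)𝟙 (which is entrywise nonnegative). Let B be an n×n entrywise nonnegative matrix and b ∈ ℝⁿ entrywise nonnegative, and let 0 < c_l ≤ c_u satisfy c_l·P ≤ B ≤ c_u·P and c_l·p ≤ b ≤ c_u·p entrywise. Then there exists f ∈ ℝⁿ with f ≥ 0 entrywise, f ≠ 0, fᵀ B = ρ(B)·fᵀ, and fᵀ b > 0, where ρ(B) is the spectral radius of B. -/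
/-!
For `t > ρ(A)` the Neumann series `∑ Aᵏ / tᵏ⁺¹` converges by Gelfand's formula, so a nonnegative
matrix `A` has an entrywise nonnegative resolvent `(t - A)⁻¹`. For `x ≥ 0` with `s • x ≤ A x` this
gives `x ≤ (t - s) (t - A)⁻¹ x`. If `s > ρ(A)`, taking `t = s` forces `x ≤ 0`: this is the
Collatz–Wielandt bound `s ≤ ρ(A)`. If `s = ρ(A)` and `x = |v|` for an eigenvector `v` whose
eigenvalue has modulus `ρ(A)`, the mass of `(t - A)⁻¹ x` blows up as `t ↓ ρ(A)`, so its
normalisations in the simplex are approximate eigenvectors, and their limit points are Perron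
vectors.

If the left Perron vector `f` of `B` had `f ⬝ᵥ b = 0`, then `b ≥ c_l p` and `B ≥ c_l P` would make
the support of `f` a closed set of states from which the chain never terminates; its indicator
`x` satisfies `P x ≥ x`, hence `ρ(P) ≥ 1`.
-/

set_option autoImplicit false

open Finset Matrix

/-- The spectral radius of a real square matrix: the maximum modulus of its complex
eigenvalues. -/
noncomputable def specRad {n : Type*} [Fintype n] [DecidableEq n] (M : Matrix n n ℝ) : ℝ :=
  sSup {x : ℝ | ∃ z : ℂ, z ∈ spectrum ℂ (M.map (Complex.ofReal : ℝ → ℂ)) ∧ x = ‖z‖}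

open Filter Topology
open scoped NNReal

theorem eventually_norm_pow_le_of_spectralRadius_lt {A : Type*} [NormedRing A]
    [NormedAlgebra ℂ A] [CompleteSpace A] {a : A} {r : ℝ≥0} (h : spectralRadius ℂ a < r) :
    ∀ᶠ k in atTop, ‖a ^ k‖ ≤ r ^ k := by
  have hgelfand := spectrum.pow_nnnorm_pow_one_div_tendsto_nhds_spectralRadius a
  filter_upwards [hgelfand.eventually_lt_const h, eventually_ge_atTop 1] with k hk hk1
  rw [one_div, ENNReal.rpow_inv_lt_iff (Nat.cast_pos.2 hk1), ENNReal.rpow_natCast] at hk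
  exact_mod_cast hk.le

section

variable {ι : Type*} [Fintype ι] [DecidableEq ι]

attribute [local instance] Matrix.linftyOpNormedRing Matrix.linftyOpNormedAlgebra

theorem specRad_nonneg (M : Matrix ι ι ℝ) : 0 ≤ specRad M :=
  Real.sSup_nonneg (by rintro _ ⟨z, -, rfl⟩; positivity)

theorem specRad_eq_sSup_norm_image (M : Matrix ι ι ℝ) :
    specRad M = sSup (norm '' spectrum ℂ (M.map Complex.ofReal)) := by
  simp only [specRad, Set.image, eq_comm]

theorem norm_le_specRad {M : Matrix ι ι ℝ} {z : ℂ}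
    (hz : z ∈ spectrum ℂ (M.map Complex.ofReal)) : ‖z‖ ≤ specRad M := by
  rw [specRad_eq_sSup_norm_image]
  exact le_csSup ((spectrum.isCompact _).image continuous_norm).bddAbove ⟨z, hz, rfl⟩

theorem exists_mem_spectrum_norm_eq_specRad [Nonempty ι] (M : Matrix ι ι ℝ) :
    ∃ z ∈ spectrum ℂ (M.map Complex.ofReal), ‖z‖ = specRad M := by
  rw [specRad_eq_sSup_norm_image]
  exact ((spectrum.isCompact _).image continuous_norm).sSup_mem ((spectrum.nonempty _).image _)

namespace Matrix

theorem spectrum_transpose {R : Type*} [CommRing R] (M : Matrix ι ι R) :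
    spectrum R Mᵀ = spectrum R M := by
  ext z
  rw [spectrum.mem_iff, spectrum.mem_iff, isUnit_iff_isUnit_det, isUnit_iff_isUnit_det,
    ← det_transpose, transpose_sub, transpose_transpose, algebraMap_eq_diagonal, diagonal_transpose]

theorem linfty_opNorm_map_ofReal (M : Matrix ι ι ℝ) : ‖M.map Complex.ofReal‖ = ‖M‖ := by
  simp [← coe_nnnorm, linfty_opNNNorm_def]

theorem map_ofReal_pow (M : Matrix ι ι ℝ) (k : ℕ) :
    M.map Complex.ofReal ^ k = (M ^ k).map Complex.ofReal :=
  (map_pow Complex.ofRealHom.mapMatrix M k).symm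

end Matrix

theorem specRad_transpose (M : Matrix ι ι ℝ) : specRad Mᵀ = specRad M := by
  rw [specRad, specRad, transpose_map, spectrum_transpose]

theorem summable_geometric_of_specRad_lt [Nonempty ι] {A : Matrix ι ι ℝ} {t : ℝ}
    (ht : specRad A < t) : Summable fun k : ℕ => (t⁻¹ • A) ^ k := by
  obtain ⟨r, hAr, hrt⟩ := exists_between ht
  have hr : 0 < r := (specRad_nonneg A).trans_lt hAr
  have ht0 : 0 < t := hr.trans hrt
  have hρ : spectralRadius ℂ (A.map Complex.ofReal) < r.toNNReal :=
    spectrum.spectralRadius_lt_of_forall_lt _ fun z hz => by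
      rw [← NNReal.coe_lt_coe, coe_nnnorm, Real.coe_toNNReal r hr.le]
      exact (norm_le_specRad hz).trans_lt hAr
  refine .of_norm_bounded_eventually_nat (summable_geometric_of_lt_one (by positivity)
    ((div_lt_one ht0).2 hrt)) ?_
  filter_upwards [eventually_norm_pow_le_of_spectralRadius_lt hρ] with k hk
  rw [map_ofReal_pow, linfty_opNorm_map_ofReal, Real.coe_toNNReal r hr.le] at hk
  rw [smul_pow, norm_smul, norm_pow, norm_inv, Real.norm_of_nonneg ht0.le, div_pow,
    div_eq_inv_mul, ← inv_pow]
  exact mul_le_mul_of_nonneg_left hk (by positivity)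

theorem exists_nonneg_inverse_of_specRad_lt [Nonempty ι] {A : Matrix ι ι ℝ}
    (hA : ∀ i j, 0 ≤ A i j) {t : ℝ} (ht : specRad A < t) :
    ∃ R : Matrix ι ι ℝ, (∀ i j, 0 ≤ R i j) ∧ R * (t • 1 - A) = 1 := by
  have ht0 : 0 < t := (specRad_nonneg A).trans_lt ht
  have hsum := summable_geometric_of_specRad_lt ht
  refine ⟨t⁻¹ • ∑' k, (t⁻¹ • A) ^ k, fun i j => ?_, ?_⟩
  · have hentry := Pi.hasSum.1 (Pi.hasSum.1 hsum.hasSum i) j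
    exact mul_nonneg (inv_nonneg.2 ht0.le) (hentry.nonneg fun k =>
      pow_apply_nonneg (fun i j => mul_nonneg (inv_nonneg.2 ht0.le) (hA i j)) k i j)
  · rw [smul_mul_assoc, ← mul_smul_comm, smul_sub, smul_smul, inv_mul_cancel₀ ht0.ne', one_smul,
      hsum.tsum_pow_mul_one_sub]

theorem le_mul_mulVec_of_smul_le_mulVec {A R : Matrix ι ι ℝ} (hR : ∀ i j, 0 ≤ R i j)
    {t : ℝ} (hRA : R * (t • 1 - A) = 1) {s : ℝ} {x : ι → ℝ}
    (hx : ∀ i, s * x i ≤ (A *ᵥ x) i) (i : ι) : x i ≤ (t - s) * (R *ᵥ x) i := by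
  have hdecomp : x = R *ᵥ ((t • 1 - A) *ᵥ x) := by rw [mulVec_mulVec, hRA, one_mulVec]
  have hle : ∀ j, ((t • 1 - A) *ᵥ x) j ≤ (t - s) * x j := fun j => by
    simp only [sub_mulVec, smul_mulVec, one_mulVec, Pi.sub_apply, Pi.smul_apply, smul_eq_mul]
    linarith [hx j]
  calc x i = (R *ᵥ ((t • 1 - A) *ᵥ x)) i := by rw [← hdecomp]
    _ ≤ (R *ᵥ ((t - s) • x)) i :=
        Finset.sum_le_sum fun j _ => mul_le_mul_of_nonneg_left (hle j) (hR i j)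
    _ = (t - s) * (R *ᵥ x) i := by rw [mulVec_smul, Pi.smul_apply, smul_eq_mul]

theorem le_specRad_of_smul_le_mulVec [Nonempty ι] {A : Matrix ι ι ℝ} (hA : ∀ i j, 0 ≤ A i j)
    {x : ι → ℝ} (hx0 : ∀ i, 0 ≤ x i) (hx : x ≠ 0) {s : ℝ} (hs : ∀ i, s * x i ≤ (A *ᵥ x) i) :
    s ≤ specRad A := by
  by_contra! h
  obtain ⟨R, hR, hRA⟩ := exists_nonneg_inverse_of_specRad_lt hA h
  refine hx (funext fun i => le_antisymm ?_ (hx0 i))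
  simpa using le_mul_mulVec_of_smul_le_mulVec hR hRA hs i

theorem exists_nonneg_specRad_smul_le_mulVec [Nonempty ι] {A : Matrix ι ι ℝ}
    (hA : ∀ i j, 0 ≤ A i j) :
    ∃ w : ι → ℝ, (∀ i, 0 ≤ w i) ∧ w ≠ 0 ∧ ∀ i, specRad A * w i ≤ (A *ᵥ w) i := by
  obtain ⟨z, hz, hzA⟩ := exists_mem_spectrum_norm_eq_specRad A
  rw [← spectrum_toLin', ← Module.End.hasEigenvalue_iff_mem_spectrum] at hz
  obtain ⟨v, hv⟩ := hz.exists_hasEigenvector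
  have hAv : A.map Complex.ofReal *ᵥ v = z • v := Module.End.mem_eigenspace_iff.1 hv.1
  refine ⟨fun i => ‖v i‖, fun i => norm_nonneg _, fun h => hv.2 (funext fun i => ?_), fun i => ?_⟩
  · simpa using congr_fun h i
  · calc specRad A * ‖v i‖ = ‖(A.map Complex.ofReal *ᵥ v) i‖ := by
          rw [hAv, Pi.smul_apply, smul_eq_mul, norm_mul, hzA]
      _ ≤ ∑ j, ‖(A i j : ℂ) * v j‖ := norm_sum_le _ _
      _ = (A *ᵥ fun i => ‖v i‖) i := by
          simp only [norm_mul, Complex.norm_real, Real.norm_of_nonneg (hA _ _)]; rfl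

theorem exists_stdSimplex_mulVec_eq_smul_sub [Nonempty ι] {A : Matrix ι ι ℝ}
    (hA : ∀ i j, 0 ≤ A i j) {w : ι → ℝ} (hw0 : ∀ i, 0 ≤ w i) (hw : w ≠ 0)
    (hwA : ∀ i, specRad A * w i ≤ (A *ᵥ w) i) {t : ℝ} (ht : specRad A < t) :
    ∃ u ∈ stdSimplex ℝ ι, ∃ c : ℝ, 0 ≤ c ∧ c ≤ (t - specRad A) / ∑ i, w i ∧
      A *ᵥ u = t • u - c • w := by
  obtain ⟨R, hR, hRA⟩ := exists_nonneg_inverse_of_specRad_lt hA ht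
  have hAR : (t • 1 - A) * R = 1 := mul_eq_one_comm.1 hRA
  set g := R *ᵥ w
  have hAg : A *ᵥ g = t • g - w := by
    rw [← (show (t • 1 - A) *ᵥ g = w by rw [mulVec_mulVec, hAR, one_mulVec]), sub_mulVec,
      smul_mulVec, one_mulVec, sub_sub_cancel]
  have hwg : ∀ i, w i ≤ (t - specRad A) * g i := le_mul_mulVec_of_smul_le_mulVec hR hRA hwA
  have hW : 0 < ∑ i, w i := by
    obtain ⟨i, hi⟩ := Function.ne_iff.1 hw
    exact Finset.sum_pos' (fun i _ => hw0 i) ⟨i, Finset.mem_univ i, (hw0 i).lt_of_ne' hi⟩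
  have hmass : ∑ i, w i ≤ (t - specRad A) * ∑ i, g i := by
    rw [Finset.mul_sum]; exact Finset.sum_le_sum fun i _ => hwg i
  have hm : 0 < ∑ i, g i := pos_of_mul_pos_right (hW.trans_le hmass) (by linarith)
  refine ⟨(∑ i, g i)⁻¹ • g, ⟨fun i => ?_, ?_⟩, (∑ i, g i)⁻¹, inv_nonneg.2 hm.le, ?_, ?_⟩
  · exact mul_nonneg (inv_nonneg.2 hm.le)
      (Finset.sum_nonneg fun j _ => mul_nonneg (hR i j) (hw0 j))
  · simp only [Pi.smul_apply, smul_eq_mul, ← Finset.mul_sum, inv_mul_cancel₀ hm.ne']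
  · rwa [le_div_iff₀ hW, inv_mul_le_iff₀ hm, mul_comm]
  · rw [mulVec_smul, hAg, smul_sub, smul_comm]

theorem exists_nonneg_mulVec_eq_specRad_smul [Nonempty ι] {A : Matrix ι ι ℝ}
    (hA : ∀ i j, 0 ≤ A i j) :
    ∃ x : ι → ℝ, (∀ i, 0 ≤ x i) ∧ x ≠ 0 ∧ A *ᵥ x = specRad A • x := by
  obtain ⟨w, hw0, hw, hwA⟩ := exists_nonneg_specRad_smul_le_mulVec hA
  choose u hu c hc0 hcw hAu using fun k : ℕ => exists_stdSimplex_mulVec_eq_smul_sub hA hw0 hw hwA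
    (lt_add_of_pos_right (specRad A) (Nat.one_div_pos_of_nat (n := k)))
  simp only [add_sub_cancel_left] at hcw
  obtain ⟨x, hx, φ, hφ, hux⟩ := (isCompact_stdSimplex ℝ ι).tendsto_subseq hu
  have hφ' := hφ.tendsto_atTop
  have ht : Tendsto (fun k => specRad A + 1 / ((φ k : ℝ) + 1)) atTop (𝓝 (specRad A)) := by
    simpa using (tendsto_one_div_add_atTop_nhds_zero_nat.comp hφ').const_add (specRad A)
  have hc : Tendsto (fun k => c (φ k)) atTop (𝓝 0) := by
    refine tendsto_of_tendsto_of_tendsto_of_le_of_le tendsto_const_nhds ?_ (fun k => hc0 _)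
      (fun k => hcw _)
    simpa using (tendsto_one_div_add_atTop_nhds_zero_nat.comp hφ').div_const (∑ i, w i)
  have hlim : Tendsto (fun k => A *ᵥ u (φ k)) atTop (𝓝 (specRad A • x - (0 : ℝ) • w)) := by
    simp only [hAu]
    exact (ht.smul hux).sub (hc.smul_const w)
  refine ⟨x, hx.1, fun h => by simpa [h] using hx.2, ?_⟩
  rw [zero_smul, sub_zero] at hlim
  exact tendsto_nhds_unique
    ((A.mulVecLin.continuous_of_finiteDimensional.tendsto x).comp hux) hlim

theorem exists_nonneg_vecMul_eq_specRad_smul [Nonempty ι] {A : Matrix ι ι ℝ}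
    (hA : ∀ i j, 0 ≤ A i j) :
    ∃ f : ι → ℝ, (∀ i, 0 ≤ f i) ∧ f ≠ 0 ∧ f ᵥ* A = specRad A • f := by
  simpa only [← mulVec_transpose, specRad_transpose] using
    exists_nonneg_mulVec_eq_specRad_smul (A := Aᵀ) fun i j => hA j i

theorem one_le_specRad_of_closed_of_one_le_sum {P : Matrix ι ι ℝ} (hP : ∀ i j, 0 ≤ P i j)
    {S : Set ι} (hS : S.Nonempty) (hclosed : ∀ i ∈ S, ∀ j, P i j ≠ 0 → j ∈ S)
    (hrow : ∀ i ∈ S, 1 ≤ ∑ j, P i j) : 1 ≤ specRad P := by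
  classical
  obtain ⟨i₀, hi₀⟩ := hS
  have : Nonempty ι := ⟨i₀⟩
  have hx0 : ∀ j, 0 ≤ S.indicator (fun _ => (1 : ℝ)) j :=
    Set.indicator_nonneg fun _ _ => zero_le_one
  refine le_specRad_of_smul_le_mulVec hP hx0 (fun h => by simpa [hi₀] using congr_fun h i₀)
    fun i => ?_
  by_cases hi : i ∈ S
  · have hPS : ∀ j, P i j * S.indicator (fun _ => 1) j = P i j := fun j => by
      by_cases hj : j ∈ S
      · simp [hj]
      · simp [hj, not_imp_comm.1 (hclosed i hi j) hj]
    simpa [mulVec, dotProduct, hPS, hi] using hrow i hi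
  · rw [Set.indicator_of_notMem hi, mul_zero]
    exact Finset.sum_nonneg fun j _ => mul_nonneg (hP i j) (hx0 j)

theorem one_sub_mulVec_const_one_apply (P : Matrix ι ι ℝ) (i : ι) :
    ((1 - P) *ᵥ fun _ => (1 : ℝ)) i = 1 - ∑ j, P i j := by
  rw [sub_mulVec, one_mulVec, Pi.sub_apply]
  simp [mulVec, dotProduct]

end

section

variable {ι : Type*} [Fintype ι]

theorem pos_of_vecMul_eq_smul {B : Matrix ι ι ℝ} (hB : ∀ i j, 0 ≤ B i j) {f : ι → ℝ}
    (hf : ∀ i, 0 ≤ f i) {r : ℝ} (hfB : f ᵥ* B = r • f) {i j : ι} (hi : 0 < f i)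
    (hij : 0 < B i j) : 0 < f j := by
  have hsum : f i * B i j ≤ (f ᵥ* B) j := Finset.single_le_sum (f := fun k => f k * B k j)
    (fun k _ => mul_nonneg (hf k) (hB k j)) (Finset.mem_univ i)
  rw [hfB, Pi.smul_apply, smul_eq_mul] at hsum
  refine (hf j).lt_of_ne' fun h => ?_
  rw [h, mul_zero] at hsum
  exact (mul_pos hi hij).not_ge hsum

theorem eq_zero_of_dotProduct_nonpos {f b : ι → ℝ} (hf : ∀ i, 0 ≤ f i) (hb : ∀ i, 0 ≤ b i)
    (hfb : f ⬝ᵥ b ≤ 0) {i : ι} (hi : 0 < f i) : b i = 0 := by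
  have hterm := (Finset.sum_eq_zero_iff_of_nonneg fun k _ => mul_nonneg (hf k) (hb k)).1
    (hfb.antisymm (Finset.sum_nonneg fun k _ => mul_nonneg (hf k) (hb k))) i (Finset.mem_univ i)
  exact (mul_eq_zero.1 hterm).resolve_left hi.ne'

end

theorem perron_vector_positive_on_termination_general (n : ℕ) (hn : 1 ≤ n)
    (P B : Matrix (Fin n) (Fin n) ℝ) (b : Fin n → ℝ) (cl : ℝ)
    (hcl : 0 < cl)
    (hP0 : ∀ i j, 0 ≤ P i j) (hPspec : specRad P < 1)
    (hB0 : ∀ i j, 0 ≤ B i j) (hb0 : ∀ i, 0 ≤ b i)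
    (hBl : ∀ i j, cl * P i j ≤ B i j)
    (hbl : ∀ i, cl * ((1 - P) *ᵥ (fun _ => (1 : ℝ))) i ≤ b i) :
    ∃ f : Fin n → ℝ, (∀ i, 0 ≤ f i) ∧ f ≠ 0 ∧
      f ᵥ* B = specRad B • f ∧ 0 < f ⬝ᵥ b := by
  have : Nonempty (Fin n) := ⟨⟨0, hn⟩⟩
  obtain ⟨f, hf0, hf, hfB⟩ := exists_nonneg_vecMul_eq_specRad_smul hB0
  refine ⟨f, hf0, hf, hfB, ?_⟩
  by_contra! hfb
  have hS : {i | 0 < f i}.Nonempty := by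
    obtain ⟨i, hi⟩ := Function.ne_iff.1 hf
    exact ⟨i, (hf0 i).lt_of_ne' hi⟩
  have hclosed : ∀ i ∈ {i | 0 < f i}, ∀ j, P i j ≠ 0 → j ∈ {i | 0 < f i} := fun i hi j hij =>
    pos_of_vecMul_eq_smul hB0 hf0 hfB hi
      ((mul_pos hcl ((hP0 i j).lt_of_ne' hij)).trans_le (hBl i j))
  have hrow : ∀ i ∈ {i | 0 < f i}, 1 ≤ ∑ j, P i j := fun i hi => by
    have hterm := hbl i
    rw [eq_zero_of_dotProduct_nonpos hf0 hb0 hfb hi, one_sub_mulVec_const_one_apply] at hterm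
    exact sub_nonpos.1 (nonpos_of_mul_nonpos_right hterm hcl)
  exact (one_le_specRad_of_closed_of_one_le_sum hP0 hS hclosed hrow).not_gt hPspec

/-- For a transient substochastic matrix `P` with termination vector `p = (I−P)𝟙`, and a
nonnegative matrix `B` and nonnegative vector `b` sandwiched entrywise between `c_l·P, c_l·p`
and `c_u·P, c_u·p` with `0 < c_l ≤ c_u`, there exists a left Perron vector `f ≥ 0`, `f ≠ 0`,
with `fᵀ B = ρ(B)·fᵀ` and `fᵀ b > 0`. -/
theorem perron_vector_positive_on_termination (n : ℕ) (hn : 1 ≤ n)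
    (P B : Matrix (Fin n) (Fin n) ℝ) (b : Fin n → ℝ) (cl cu : ℝ)
    (hcl : 0 < cl) (hclu : cl ≤ cu)
    (hP0 : ∀ i j, 0 ≤ P i j) (hProw : ∀ i, ∑ j, P i j ≤ 1) (hPspec : specRad P < 1)
    (hB0 : ∀ i j, 0 ≤ B i j) (hb0 : ∀ i, 0 ≤ b i)
    (hBl : ∀ i j, cl * P i j ≤ B i j) (hBu : ∀ i j, B i j ≤ cu * P i j)
    (hbl : ∀ i, cl * ((1 - P) *ᵥ (fun _ => (1 : ℝ))) i ≤ b i)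
    (hbu : ∀ i, b i ≤ cu * ((1 - P) *ᵥ (fun _ => (1 : ℝ))) i) :
    ∃ f : Fin n → ℝ, (∀ i, 0 ≤ f i) ∧ f ≠ 0 ∧
      f ᵥ* B = specRad B • f ∧ 0 < f ⬝ᵥ b :=
  perron_vector_positive_on_termination_general n hn P B b cl hcl hP0 hPspec hB0 hb0 hBl hbl
end

section
/- Let β > 0 and let X be a real random variable on a probability space such that both X and exp(−βX) are integrable. Then the function y ↦ E[ℓ_β(X − y)] on ℝ attains its minimum at the unique point y⋆ = −β⁻¹ log E[exp(−βX)] (the entropic risk measure ERM_β[X]); that is, ERM_β[X] = argmin_{y∈ℝ} E[ℓ_β(X − y)], and the minimizer is unique. -/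
set_option autoImplicit false

open MeasureTheory

/-- Elicitability of the entropic risk measure: for an integrable random variable `X` with
integrable `exp(−βX)`, the function `y ↦ E[ℓ_β(X − y)]` with
`ℓ_β(z) = β⁻¹(exp(−βz) − 1) + z` attains its minimum at the unique point
`y⋆ = ERM_β[X] = −β⁻¹ log E[exp(−βX)]`. -/
theorem erm_is_elicitable {Ω : Type*} [MeasurableSpace Ω] (μ : Measure Ω)
    [IsProbabilityMeasure μ] (β : ℝ) (hβ : 0 < β) (X : Ω → ℝ)
    (hX : Integrable X μ) (hexp : Integrable (fun ω => Real.exp (-β * X ω)) μ) :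
    let ystar : ℝ := -β⁻¹ * Real.log (∫ ω, Real.exp (-β * X ω) ∂μ)
    let F : ℝ → ℝ := fun y =>
      ∫ ω, (β⁻¹ * (Real.exp (-β * (X ω - y)) - 1) + (X ω - y)) ∂μ
    (∀ y : ℝ, F ystar ≤ F y) ∧ (∀ y : ℝ, F y ≤ F ystar → y = ystar) := by
  intro ystar F
  set E : ℝ := ∫ ω, Real.exp (-β * X ω) ∂μ with hEdef
  have hE : 0 < E := by
    have : NeZero μ := ⟨IsProbabilityMeasure.ne_zero μ⟩
    simpa [hEdef, neg_mul] using integral_exp_pos (f := fun ω => -(β * X ω)) (by simpa [neg_mul] using hexp)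
  -- closed form of F
  have hF : ∀ y : ℝ, F y = β⁻¹ * (Real.exp (β * y) * E - 1) + ((∫ ω, X ω ∂μ) - y) := by
    intro y
    have h1 : Integrable (fun ω => β⁻¹ * (Real.exp (-β * (X ω - y)) - 1)) μ := by
      apply Integrable.const_mul
      apply Integrable.sub _ (integrable_const 1)
      have : (fun ω => Real.exp (-β * (X ω - y))) =
          fun ω => Real.exp (β * y) * Real.exp (-β * X ω) := by
        funext ω; rw [← Real.exp_add]; ring_nf
      rw [this]; exact hexp.const_mul _
    have h2 : Integrable (fun ω => X ω - y) μ := hX.sub (integrable_const y)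
    calc F y = (∫ ω, β⁻¹ * (Real.exp (-β * (X ω - y)) - 1) ∂μ) + ∫ ω, (X ω - y) ∂μ :=
        integral_add h1 h2
      _ = β⁻¹ * (Real.exp (β * y) * E - 1) + ((∫ ω, X ω ∂μ) - y) := by
        rw [integral_const_mul, integral_sub hX (integrable_const y)]
        congr 2
        have heq : (fun ω => Real.exp (-β * (X ω - y)) - 1) =
            fun ω => Real.exp (β * y) * Real.exp (-β * X ω) - 1 := by
          funext ω; rw [← Real.exp_add]; ring_nf
        rw [heq, integral_sub ((hexp.const_mul _)) (integrable_const 1),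
          integral_const_mul, integral_const]
        simp [hEdef]
        simp
  have hstar : Real.exp (β * ystar) * E = 1 := by
    have : β * ystar = -Real.log E := by
      show β * (-β⁻¹ * Real.log E) = _
      field_simp
    rw [this, Real.exp_neg, Real.exp_log hE, inv_mul_cancel₀ hE.ne']
  -- key difference formula
  have hdiff : ∀ y : ℝ, F y - F ystar =
      β⁻¹ * (Real.exp (β * (y - ystar)) - 1 - β * (y - ystar)) := by
    intro y
    have hy : Real.exp (β * y) * E = Real.exp (β * (y - ystar)) := by
      have : β * y = β * (y - ystar) + β * ystar := by ring
      rw [this, Real.exp_add, mul_assoc, hstar, mul_one]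
    rw [hF y, hF ystar, hy, hstar]
    field_simp
    ring
  constructor
  · intro y
    have h := Real.add_one_le_exp (β * (y - ystar))
    have : 0 ≤ F y - F ystar := by
      rw [hdiff y]
      have : 0 ≤ Real.exp (β * (y - ystar)) - 1 - β * (y - ystar) := by linarith
      positivity
    linarith
  · intro y hy
    by_contra hne
    have hu : β * (y - ystar) ≠ 0 := by
      intro h
      rcases mul_eq_zero.mp h with h | h
      · exact hβ.ne' h
      · exact hne (by linarith [sub_eq_zero.mp h])
    have h := Real.add_one_lt_exp hu
    have : 0 < F y - F ystar := by
      rw [hdiff y]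
      have : 0 < Real.exp (β * (y - ystar)) - 1 - β * (y - ystar) := by linarith
      positivity
    linarith
end

section
/- Let α ∈ (0,1), δ > 0, and β₀ > 0 with β₀·δ < log(1/α). Let K ∈ ℕ and let β₀ < β₁ < … < β_K be defined by the recursion β_{k+1} = β_k·log(1/α) / ( log(1/α) − β_k·δ ), where β_k·δ < log(1/α) for all k < K, and assume β_K ≥ log(1/α)/δ. Let f : [0,∞) → ℝ be nonincreasing. Then max_{0≤k≤K} ( f(β_k) + β_k⁻¹·log α ) ≤ sup_{β>0} ( f(β) + β⁻¹·log α ) ≤ max_{0≤k≤K} ( f(β_k) + β_k⁻¹·log α ) + max{ f(0) − f(β₀), δ }. -/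
set_option autoImplicit false

open Finset

/-!
Write `L = log (1/α) > 0`, so the objective is `f β − L/β`. The recursion is chosen so that
`−L/β_{k+1} = −L/β_k + δ`. A point `β` of a gap `[β_k, β_{k+1}]` has `f β ≤ f β_k` and
`−L/β ≤ −L/β_{k+1}`, so its objective exceeds that of `β_k` by at most `δ`. Below the grid the
objective is at most `f 0 − L/β₀`, and above it at most `f β_K ≤ f β_K − L/β_K + δ`, because
`L/β_K ≤ δ`.
-/

lemma AntitoneOn.add_inv_mul_le {f : ℝ → ℝ} (hf : AntitoneOn f (Set.Ici 0)) {c β b t : ℝ}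
    (hc : c ≤ 0) (hβ : 0 ≤ β) (hβb : β ≤ b) (ht : t ≤ b⁻¹) :
    f b + b⁻¹ * c ≤ f β + t * c :=
  add_le_add (hf hβ (hβ.trans hβb) hβb) (mul_le_mul_of_nonpos_right ht hc)

lemma exists_le_le_succ_of_le_of_lt {α : Type*} [LinearOrder α] (u : ℕ → α) {x : α} :
    ∀ {n : ℕ}, u 0 ≤ x → x < u n → ∃ k < n, u k ≤ x ∧ x ≤ u (k + 1)
  | 0, h0, hn => absurd (h0.trans_lt hn) (lt_irrefl _)
  | n + 1, h0, hn => by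
    by_cases hx : u n ≤ x
    · exact ⟨n, n.lt_succ_self, hx, hn.le⟩
    · obtain ⟨k, hk, hxk⟩ := exists_le_le_succ_of_le_of_lt u h0 (not_le.1 hx)
      exact ⟨k, hk.trans n.lt_succ_self, hxk⟩

section Grid

variable {L δ b : ℝ}

lemma inv_grid_step_mul_neg (hL : L ≠ 0) (hb : b ≠ 0) :
    (b * L / (L - b * δ))⁻¹ * -L = b⁻¹ * -L + δ := by
  rw [inv_div]
  field_simp
  ring

variable {K : ℕ} {B : ℕ → ℝ} (hL : 0 < L) (hB0 : 0 < B 0)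
  (hdom : ∀ k < K, B k * δ < L) (hrec : ∀ k < K, B (k + 1) = B k * L / (L - B k * δ))
include hL hB0 hdom hrec

lemma grid_pos : ∀ k ≤ K, 0 < B k
  | 0, _ => hB0
  | k + 1, hk => by
    rw [hrec k hk]
    exact div_pos (mul_pos (grid_pos k (Nat.le_of_succ_le hk)) hL) (sub_pos.2 (hdom k hk))

lemma inv_grid_succ_mul_neg {k : ℕ} (hk : k < K) :
    (B (k + 1))⁻¹ * -L = (B k)⁻¹ * -L + δ := by
  rw [hrec k hk]
  exact inv_grid_step_mul_neg hL.ne' (grid_pos hL hB0 hdom hrec k hk.le).ne'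

lemma add_inv_mul_neg_le_grid_sup_add {f : ℝ → ℝ} (hf : AntitoneOn f (Set.Ici 0))
    (hδ : 0 < δ) (hK : L / δ ≤ B K) (hb : 0 < b) :
    f b + b⁻¹ * -L ≤ (range (K + 1)).sup' nonempty_range_add_one
        (fun k => f (B k) + (B k)⁻¹ * -L) + max (f 0 - f (B 0)) δ := by
  have hpos := grid_pos hL hB0 hdom hrec
  have hneg : -L ≤ 0 := by linarith
  have hgrid : ∀ k ≤ K, f (B k) + (B k)⁻¹ * -L ≤ (range (K + 1)).sup' nonempty_range_add_one
      (fun k => f (B k) + (B k)⁻¹ * -L) := fun k hk =>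
    le_sup' (fun k => f (B k) + (B k)⁻¹ * -L) (mem_range.2 (Nat.lt_succ_of_le hk))
  rcases le_or_gt b (B 0) with hleft | hB0b
  · have := hf.add_inv_mul_le hneg le_rfl hb.le (inv_anti₀ hb hleft)
    linarith [hgrid 0 K.zero_le, le_max_left (f 0 - f (B 0)) δ]
  rcases le_or_gt (B K) b with hright | hbBK
  · have hBK := hpos K le_rfl
    have hLBK : L / B K ≤ δ := (div_le_iff₀ hBK).2 (by linarith [(div_le_iff₀ hδ).1 hK])
    have := hf.add_inv_mul_le hneg hBK.le hright (inv_nonneg.2 hb.le)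
    have : (B K)⁻¹ * -L = -(L / B K) := by ring
    linarith [hgrid K le_rfl, le_max_right (f 0 - f (B 0)) δ]
  obtain ⟨k, hk, hkb, hbk⟩ := exists_le_le_succ_of_le_of_lt B hB0b.le hbBK
  have := hf.add_inv_mul_le hneg (hpos k hk.le).le hkb (inv_anti₀ hb hbk)
  linarith [inv_grid_succ_mul_neg hL hB0 hdom hrec hk, hgrid k hk.le,
    le_max_right (f 0 - f (B 0)) δ]

end Grid

theorem evar_grid_approximation_general (α δ : ℝ) (hα : α ∈ Set.Ioo (0 : ℝ) 1) (hδ : 0 < δ)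
    (K : ℕ) (B : ℕ → ℝ) (hB0 : 0 < B 0)
    (hdom : ∀ k < K, B k * δ < Real.log (1 / α))
    (hrec : ∀ k < K, B (k + 1) = B k * Real.log (1 / α) / (Real.log (1 / α) - B k * δ))
    (hK : Real.log (1 / α) / δ ≤ B K)
    (f : ℝ → ℝ) (hf : AntitoneOn f (Set.Ici 0)) :
    ((Finset.range (K + 1)).sup' Finset.nonempty_range_add_one
        fun k => f (B k) + (B k)⁻¹ * Real.log α) ≤
      sSup {x : ℝ | ∃ b : ℝ, 0 < b ∧ x = f b + b⁻¹ * Real.log α} ∧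
    sSup {x : ℝ | ∃ b : ℝ, 0 < b ∧ x = f b + b⁻¹ * Real.log α} ≤
      ((Finset.range (K + 1)).sup' Finset.nonempty_range_add_one
        fun k => f (B k) + (B k)⁻¹ * Real.log α) + max (f 0 - f (B 0)) δ := by
  have hL : 0 < Real.log (1 / α) := Real.log_pos (one_lt_one_div hα.1 hα.2)
  have hlog : Real.log α = -Real.log (1 / α) := by rw [one_div, Real.log_inv, neg_neg]
  rw [hlog]
  have hbdd : BddAbove {x : ℝ | ∃ b : ℝ, 0 < b ∧ x = f b + b⁻¹ * -Real.log (1 / α)} := by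
    refine ⟨f 0, ?_⟩
    rintro _ ⟨b, hb, rfl⟩
    simpa using hf.add_inv_mul_le (neg_nonpos.2 hL.le) le_rfl hb.le (inv_nonneg.2 hb.le)
  refine ⟨sup'_le _ _ fun k hk => le_csSup hbdd ⟨B k, ?_, rfl⟩, csSup_le ⟨_, B 0, hB0, rfl⟩ ?_⟩
  · exact grid_pos hL hB0 hdom hrec k (Nat.lt_succ_iff.1 (mem_range.1 hk))
  · rintro _ ⟨b, hb, rfl⟩
    exact add_inv_mul_neg_le_grid_sup_add hL hB0 hdom hrec hf hδ hK hb

/-- Grid approximation of the EVaR supremum: with the grid `β₀ < β₁ < … < β_K` generated by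
the recursion `β_{k+1} = β_k log(1/α) / (log(1/α) − β_k δ)` with `β_K ≥ log(1/α)/δ`, for any
nonincreasing `f : [0,∞) → ℝ`,
`max_k (f(β_k) + β_k⁻¹ log α) ≤ sup_{β>0} (f(β) + β⁻¹ log α)
  ≤ max_k (f(β_k) + β_k⁻¹ log α) + max{f(0) − f(β₀), δ}`. -/
theorem evar_grid_approximation (α δ : ℝ) (hα : α ∈ Set.Ioo (0 : ℝ) 1) (hδ : 0 < δ)
    (K : ℕ) (B : ℕ → ℝ) (hB0 : 0 < B 0) (hB0δ : B 0 * δ < Real.log (1 / α))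
    (hmono : ∀ k < K, B k < B (k + 1))
    (hdom : ∀ k < K, B k * δ < Real.log (1 / α))
    (hrec : ∀ k < K, B (k + 1) = B k * Real.log (1 / α) / (Real.log (1 / α) - B k * δ))
    (hK : Real.log (1 / α) / δ ≤ B K)
    (f : ℝ → ℝ) (hf : AntitoneOn f (Set.Ici 0)) :
    ((Finset.range (K + 1)).sup' Finset.nonempty_range_add_one
        fun k => f (B k) + (B k)⁻¹ * Real.log α) ≤
      sSup {x : ℝ | ∃ b : ℝ, 0 < b ∧ x = f b + b⁻¹ * Real.log α} ∧
    sSup {x : ℝ | ∃ b : ℝ, 0 < b ∧ x = f b + b⁻¹ * Real.log α} ≤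
      ((Finset.range (K + 1)).sup' Finset.nonempty_range_add_one
        fun k => f (B k) + (B k)⁻¹ * Real.log α) + max (f 0 - f (B 0)) δ :=
  evar_grid_approximation_general α δ hα hδ K B hB0 hdom hrec hK f hf
end

section
/- Let α ∈ (0,1), δ > 0, and β₀ > 0 with β₀·δ < log(1/α), and set z = β₀·δ / log(1/α) ∈ (0,1). Define β_{k+1} = β_k·log(1/α) / ( log(1/α) − β_k·δ ) recursively, and let K ∈ ℕ satisfy K ≥ log(z) / log(1−z). If β_k·δ < log(1/α) for all k < K (so the recursion is well defined up to step K), then β_K ≥ log(1/α)/δ. -/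
set_option autoImplicit false

/-!
Writing `L = log(1/α)`, the recursion reads `1/β_{k+1} = 1/β_k - δ/L`, so the reciprocals of
the grid points decrease arithmetically: `β_k (L - k δ β₀) = L β₀`. Hence `β_K δ ≥ L` as soon
as `1 - K z ≤ z`, and this follows from `K ≥ log z / log(1 - z)` via `1 - K z ≤ (1 - z)^K ≤ z`
(Bernoulli).
-/

open Real

theorem one_sub_pow_le_of_log_div_log_one_sub_le {z : ℝ} (hz0 : 0 < z) (hz1 : z < 1) {K : ℕ}
    (hK : log z / log (1 - z) ≤ K) : (1 - z) ^ K ≤ z := by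
  have hlog : log (1 - z) < 0 := log_neg (by linarith) (by linarith)
  rw [← log_le_log_iff (pow_pos (by linarith) K) hz0, log_pow]
  rwa [div_le_iff_of_neg hlog] at hK

theorem one_sub_mul_le_of_log_div_log_one_sub_le {z : ℝ} (hz0 : 0 < z) (hz1 : z < 1) {K : ℕ}
    (hK : log z / log (1 - z) ≤ K) : 1 - K * z ≤ z :=
  calc 1 - K * z = 1 + K * (-z) := by ring
    _ ≤ (1 + -z) ^ K := one_add_mul_le_pow (by linarith) K
    _ ≤ z := by simpa [← sub_eq_add_neg] using one_sub_pow_le_of_log_div_log_one_sub_le hz0 hz1 hK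

section GridRecursion

variable {𝕜 : Type*} {L δ : 𝕜} {B : ℕ → 𝕜} {K : ℕ}

theorem grid_mul_sub_eq [Field 𝕜] (hrec : ∀ k < K, B (k + 1) = B k * L / (L - B k * δ))
    (hne : ∀ k < K, L - B k * δ ≠ 0) : ∀ k ≤ K, B k * (L - k * δ * B 0) = L * B 0 := by
  intro k hk
  induction k with
  | zero => simp [mul_comm]
  | succ k ih =>
    have hkK : k < K := hk
    rw [hrec k hkK, div_mul_eq_mul_div, div_eq_iff (hne k hkK)]
    push_cast
    linear_combination L * ih (Nat.le_of_succ_le hk)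

theorem grid_pos_s17 [Field 𝕜] [LinearOrder 𝕜] [IsStrictOrderedRing 𝕜] (hL : 0 < L)
    (hrec : ∀ k < K, B (k + 1) = B k * L / (L - B k * δ))
    (hdom : ∀ k < K, B k * δ < L) (hB0 : 0 < B 0) : ∀ k ≤ K, 0 < B k := by
  intro k hk
  induction k with
  | zero => exact hB0
  | succ k ih =>
    rw [hrec k hk]
    exact div_pos (mul_pos (ih (Nat.le_of_succ_le hk)) hL) (sub_pos.mpr (hdom k hk))

end GridRecursion

/-- Bound on the number of grid points: if `z = β₀δ/log(1/α) ∈ (0,1)`, the recursion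
`β_{k+1} = β_k log(1/α) / (log(1/α) − β_k δ)` is well defined up to step `K`
(i.e. `β_k δ < log(1/α)` for all `k < K`), and `K ≥ log z / log(1−z)`, then
`β_K ≥ log(1/α)/δ`. -/
theorem evar_grid_size_bound (α δ β₀ : ℝ) (hα : α ∈ Set.Ioo (0 : ℝ) 1) (hδ : 0 < δ)
    (hβ₀ : 0 < β₀) (hsmall : β₀ * δ < Real.log (1 / α))
    (B : ℕ → ℝ) (hB0 : B 0 = β₀) (K : ℕ)
    (hrec : ∀ k < K, B (k + 1) = B k * Real.log (1 / α) / (Real.log (1 / α) - B k * δ))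
    (hdom : ∀ k < K, B k * δ < Real.log (1 / α))
    (hK : Real.log (β₀ * δ / Real.log (1 / α)) /
        Real.log (1 - β₀ * δ / Real.log (1 / α)) ≤ (K : ℝ)) :
    Real.log (1 / α) / δ ≤ B K := by
  set L := log (1 / α)
  have hL : 0 < L := log_pos (one_lt_one_div hα.1 hα.2)
  have hKz := one_sub_mul_le_of_log_div_log_one_sub_le (div_pos (mul_pos hβ₀ hδ) hL)
    ((div_lt_one hL).mpr hsmall) hK
  have hbound : L - K * (β₀ * δ) ≤ β₀ * δ := by
    have h := mul_le_mul_of_nonneg_right hKz hL.le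
    rwa [sub_mul, one_mul, mul_assoc, div_mul_cancel₀ _ hL.ne'] at h
  have hpos := grid_pos_s17 hL hrec hdom (hB0 ▸ hβ₀) K le_rfl
  have hinv := grid_mul_sub_eq hrec (fun k hk => (sub_pos.mpr (hdom k hk)).ne') K le_rfl
  rw [hB0] at hinv
  rw [div_le_iff₀ hδ]
  nlinarith [mul_pos hpos hδ, mul_pos hβ₀ hδ]
end

section
/- Let S be a finite state set, A a finite nonempty action set, p : S × A → Δ(S) transition probabilities (each p(s,a,·) sums to 1 over S), r : S × A × S → ℝ rewards, and β > 0. Then for every q : S × A → ℝ and every (s,a) ∈ S × A, the value (B_β q)(s,a) = −β⁻¹ · log( Σ_{s'} p(s,a,s') · exp( −β·( r(s,a,s') + max_{a'∈A} q(s',a') ) ) ) is the unique minimizer over y ∈ ℝ of Σ_{s'} p(s,a,s') · ℓ_β( r(s,a,s') + max_{a'∈A} q(s',a') − y ). Hence the ERM Bellman operator B_β coincides with the elicitability-based Bellman operator B̂_β defined by this argmin. -/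
set_option autoImplicit false

open Finset

/-- The ERM Bellman operator coincides with the elicitability-based Bellman operator:
`(B_β q)(s,a) = −β⁻¹ log( Σ_{s'} p(s,a,s')·exp(−β(r(s,a,s') + max_{a'} q(s',a'))) )`
is the unique minimizer over `y ∈ ℝ` of
`Σ_{s'} p(s,a,s')·ℓ_β( r(s,a,s') + max_{a'} q(s',a') − y )`. -/
theorem erm_bellman_eq_elicitable_bellman {S A : Type*} [Fintype S] [Fintype A] [Nonempty A]
    (p : S → A → S → ℝ) (r : S → A → S → ℝ) (β : ℝ) (hβ : 0 < β)
    (hp0 : ∀ s a s', 0 ≤ p s a s') (hp1 : ∀ s a, ∑ s' : S, p s a s' = 1)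
    (q : S → A → ℝ) (s : S) (a : A) :
    let Bq : ℝ := -β⁻¹ * Real.log (∑ s' : S, p s a s' *
      Real.exp (-β * (r s a s' + ⨆ a' : A, q s' a')))
    let F : ℝ → ℝ := fun y => ∑ s' : S, p s a s' *
      (β⁻¹ * (Real.exp (-β * (r s a s' + (⨆ a' : A, q s' a') - y)) - 1) +
        (r s a s' + (⨆ a' : A, q s' a') - y))
    (∀ y : ℝ, F Bq ≤ F y) ∧ (∀ y : ℝ, (∀ y' : ℝ, F y ≤ F y') → y = Bq) := by
  intro Bq F
  set E : ℝ := ∑ s' : S, p s a s' *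
      Real.exp (-β * (r s a s' + ⨆ a' : A, q s' a')) with hEdef
  have hEpos : 0 < E := by
    have hex : ∃ s₀ : S, 0 < p s a s₀ := by
      by_contra h
      push_neg at h
      have h0 : ∑ s' : S, p s a s' = 0 :=
        Finset.sum_eq_zero fun s' _ => le_antisymm (h s') (hp0 s a s')
      rw [hp1 s a] at h0
      exact one_ne_zero h0
    obtain ⟨s₀, hs₀⟩ := hex
    refine Finset.sum_pos' (fun s' _ => ?_) ⟨s₀, Finset.mem_univ s₀, ?_⟩
    · exact mul_nonneg (hp0 s a s') (Real.exp_pos _).le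
    · exact mul_pos hs₀ (Real.exp_pos _)
  have hβ' : β ≠ 0 := ne_of_gt hβ
  have hBqE : Real.exp (β * Bq) * E = 1 := by
    have hb : β * Bq = -Real.log E := by
      show β * (-β⁻¹ * Real.log E) = -Real.log E
      field_simp
    rw [hb, Real.exp_neg, Real.exp_log hEpos, inv_mul_cancel₀ (ne_of_gt hEpos)]
  -- formula for F
  have hF : ∀ y : ℝ, F y = β⁻¹ * Real.exp (β * y) * E +
      ((∑ s' : S, p s a s' * (r s a s' + ⨆ a' : A, q s' a')) - β⁻¹ - y) := by
    intro y
    have hterm : ∀ s' : S, p s a s' *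
        (β⁻¹ * (Real.exp (-β * (r s a s' + (⨆ a' : A, q s' a') - y)) - 1) +
          (r s a s' + (⨆ a' : A, q s' a') - y)) =
        β⁻¹ * Real.exp (β * y) * (p s a s' *
          Real.exp (-β * (r s a s' + ⨆ a' : A, q s' a'))) +
        (p s a s' * (r s a s' + ⨆ a' : A, q s' a') - β⁻¹ * p s a s' - y * p s a s') := by
      intro s'
      rw [show -β * (r s a s' + (⨆ a' : A, q s' a') - y) =
        β * y + -β * (r s a s' + ⨆ a' : A, q s' a') by ring, Real.exp_add]
      ring
    show (∑ s' : S, p s a s' *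
        (β⁻¹ * (Real.exp (-β * (r s a s' + (⨆ a' : A, q s' a') - y)) - 1) +
          (r s a s' + (⨆ a' : A, q s' a') - y))) = _
    rw [Finset.sum_congr rfl fun s' _ => hterm s']
    rw [Finset.sum_add_distrib, Finset.sum_sub_distrib, Finset.sum_sub_distrib,
      ← Finset.mul_sum, ← Finset.mul_sum, ← Finset.mul_sum, hp1 s a, ← hEdef]
    ring
  have hdiff : ∀ y : ℝ, F y - F Bq =
      β⁻¹ * (Real.exp (β * (y - Bq)) - 1 - β * (y - Bq)) := by
    intro y
    have hy : Real.exp (β * y) = Real.exp (β * (y - Bq)) * Real.exp (β * Bq) := by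
      rw [← Real.exp_add]; congr 1; ring
    rw [hF y, hF Bq]
    have : β⁻¹ * Real.exp (β * y) * E - β⁻¹ * Real.exp (β * Bq) * E =
        β⁻¹ * (Real.exp (β * (y - Bq)) - 1) := by
      rw [hy]
      calc β⁻¹ * (Real.exp (β * (y - Bq)) * Real.exp (β * Bq)) * E -
            β⁻¹ * Real.exp (β * Bq) * E
          = β⁻¹ * (Real.exp (β * (y - Bq)) * (Real.exp (β * Bq) * E) -
              (Real.exp (β * Bq) * E)) := by ring
        _ = β⁻¹ * (Real.exp (β * (y - Bq)) - 1) := by rw [hBqE]; ring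
    have hinv : β⁻¹ * (β * (y - Bq)) = y - Bq := by field_simp
    calc β⁻¹ * Real.exp (β * y) * E +
          ((∑ s' : S, p s a s' * (r s a s' + ⨆ a' : A, q s' a')) - β⁻¹ - y) -
        (β⁻¹ * Real.exp (β * Bq) * E +
          ((∑ s' : S, p s a s' * (r s a s' + ⨆ a' : A, q s' a')) - β⁻¹ - Bq))
        = (β⁻¹ * Real.exp (β * y) * E - β⁻¹ * Real.exp (β * Bq) * E) - (y - Bq) := by ring
      _ = β⁻¹ * (Real.exp (β * (y - Bq)) - 1) - β⁻¹ * (β * (y - Bq)) := by rw [this, hinv]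
      _ = β⁻¹ * (Real.exp (β * (y - Bq)) - 1 - β * (y - Bq)) := by ring
  have hmin : ∀ y : ℝ, F Bq ≤ F y := by
    intro y
    have h1 : 0 ≤ Real.exp (β * (y - Bq)) - 1 - β * (y - Bq) := by
      have := Real.add_one_le_exp (β * (y - Bq))
      linarith
    have h2 : 0 ≤ F y - F Bq := by
      rw [hdiff y]
      exact mul_nonneg (inv_nonneg.mpr hβ.le) h1
    linarith
  refine ⟨hmin, fun y hy => ?_⟩
  have heq : F y = F Bq := le_antisymm (hy Bq) (hmin y)
  have h0 : β⁻¹ * (Real.exp (β * (y - Bq)) - 1 - β * (y - Bq)) = 0 := by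
    rw [← hdiff y, heq]; ring
  have h1 : Real.exp (β * (y - Bq)) - 1 - β * (y - Bq) = 0 := by
    rcases mul_eq_zero.mp h0 with h | h
    · exact absurd h (inv_ne_zero hβ')
    · exact h
  have ht : β * (y - Bq) = 0 := by
    by_contra ht
    have := Real.add_one_lt_exp ht
    linarith
  have : y - Bq = 0 := by
    rcases mul_eq_zero.mp ht with h | h
    · exact absurd h hβ'
    · exact h
  linarith
end
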